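/- arXiv:0801.3964 — 5 statements merged into one kernel-verified Lean document; each statement's English description precedes it below -/
import Mathlib

section
/- The generalized Chebyshev polynomials satisfy the cluster-mesh relation: for all n ≥ 1, P_n(t_0, ..., t_{n-1}) · P_n(t_1, ..., t_n) − 1 = P_{n+1}(t_0, ..., t_n) · P_{n-1}(t_1, ..., t_{n-1}), as an identity in the polynomial ring ℤ[t_0, ..., t_n]. -/
open MvPolynomial Polynomial

/-- Generalized Chebyshev evaluation: `cheb n t = P_n(t 0, ..., t (n-1))`,
where `P_0 = 1`, `P_1(t_0) = t_0`, and
`P_{n+1}(t_0,...,t_n) = t_n * P_n(t_0,...,t_{n-1}) - P_{n-1}(t_0,...,t_{n-2})`. -/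
def cheb {R : Type*} [CommRing R] : ℕ → (ℕ → R) → R
  | 0, _ => 1
  | 1, t => t 0
  | (n + 2), t => t (n + 1) * cheb (n + 1) t - cheb n t

-- Shifted by one index from the paper's form so that no natural-number subtraction occurs.
theorem cheb_succ_mul_cheb_succ_shift_sub_one {R : Type*} [CommRing R] (t : ℕ → R) (n : ℕ) :
    cheb (n + 1) t * cheb (n + 1) (fun k => t (k + 1)) - 1 =
      cheb (n + 2) t * cheb n (fun k => t (k + 1)) := by
  induction n with
  | zero => simp only [cheb]; ring
  | succ n ih =>
    simp only [cheb] at ih ⊢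
    linear_combination ih

/-- the cluster-mesh relation in `ℤ[t_0, ..., t_n]`. -/
theorem cheb_cluster_mesh (n : ℕ) (hn : 1 ≤ n) :
    cheb n (fun k => (X k : MvPolynomial ℕ ℤ)) *
        cheb n (fun k => (X (k + 1) : MvPolynomial ℕ ℤ)) - 1 =
      cheb (n + 1) (fun k => (X k : MvPolynomial ℕ ℤ)) *
        cheb (n - 1) (fun k => (X (k + 1) : MvPolynomial ℕ ℤ)) := by
  obtain ⟨m, rfl⟩ := Nat.exists_eq_add_of_le' hn
  exact cheb_succ_mul_cheb_succ_shift_sub_one (fun k => X k) m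
end

section
/- Let F be a field and let (x_i)_{i∈ℤ} be nonzero elements of F. Define x_{i,0} = 1, x_{i,1} = x_i, and suppose for all i ∈ ℤ and n ≥ 1 the cluster-mesh relation x_{i,n} · x_{i+1,n} = x_{i,n+1} · x_{i+1,n-1} + 1 holds, with all x_{i,n} nonzero. Then for every i ∈ ℤ and n ≥ 1, x_{i,n} = P_n(x_i, x_{i+1}, ..., x_{i+n-1}), where P_n is the n-th generalized Chebyshev polynomial. -/
/-!
The Chebyshev evaluations `c i n = P_n(x_i, …, x_{i+n-1})` satisfy the cluster-mesh relation
themselves: this is the identity `P_{n+1}(t) P_{n+1}(t') = P_{n+2}(t) P_n(t') + 1`, with `t'`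
the shift of `t`, proved by induction from the three-term recurrence. A family satisfying the
relation is determined by its rows `0` and `1` as long as it does not vanish, because the
relation at `(i, n + 1)` can be solved for `y i (n + 2)` after cancelling `y (i + 1) n`.
-/

open MvPolynomial Polynomial

section ClusterMesh

variable {R : Type*} [CommRing R]

theorem cheb_add_two (n : ℕ) (t : ℕ → R) :
    cheb (n + 2) t = t (n + 1) * cheb (n + 1) t - cheb n t :=
  rfl

theorem cheb_succ_mul_cheb_succ_shift (t : ℕ → R) (n : ℕ) :
    cheb (n + 1) t * cheb (n + 1) (fun k => t (k + 1)) =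
      cheb (n + 2) t * cheb n (fun k => t (k + 1)) + 1 := by
  induction n with
  | zero => simp only [cheb]; ring
  | succ n ih =>
    rw [cheb_add_two (n + 1) t, cheb_add_two n fun k => t (k + 1)]
    linear_combination ih

/-- The cluster-mesh relation, indexed from `n + 1` so that no truncated subtraction occurs. -/
def IsClusterMesh (y : ℤ → ℕ → R) : Prop :=
  ∀ i n, y i (n + 1) * y (i + 1) (n + 1) = y i (n + 2) * y (i + 1) n + 1

theorem isClusterMesh_cheb (x : ℤ → R) :
    IsClusterMesh fun i n => cheb n fun k => x (i + k) := by
  intro i n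
  have hshift : (fun k : ℕ => x (i + (k + 1 : ℕ))) = fun k : ℕ => x (i + 1 + k) := by
    funext k
    push_cast
    ring_nf
  simpa only [hshift] using cheb_succ_mul_cheb_succ_shift (fun k : ℕ => x (i + k)) n

theorem IsClusterMesh.ext [IsDomain R] {y z : ℤ → ℕ → R}
    (hy : IsClusterMesh y) (hz : IsClusterMesh z) (hne : ∀ i n, y i n ≠ 0)
    (h0 : ∀ i, y i 0 = z i 0) (h1 : ∀ i, y i 1 = z i 1) : y = z := by
  suffices h : ∀ n i, y i n = z i n from funext fun i => funext fun n => h n i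
  refine Nat.twoStepInduction h0 h1 fun n ih0 ih1 i => ?_
  have hyz := hy i n
  rw [ih1 i, ih1 (i + 1), ih0 (i + 1), hz i n, add_left_inj] at hyz
  exact (mul_right_cancel₀ (ih0 (i + 1) ▸ hne (i + 1) n) hyz).symm

end ClusterMesh

theorem clusterMesh_eq_cheb_general {F : Type*} [Field F] (x : ℤ → F) (y : ℤ → ℕ → F)
    (hy : ∀ i n, y i n ≠ 0)
    (hy0 : ∀ i, y i 0 = 1) (hy1 : ∀ i, y i 1 = x i)
    (hrec : ∀ i : ℤ, ∀ n : ℕ, 1 ≤ n →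
      y i n * y (i + 1) n = y i (n + 1) * y (i + 1) (n - 1) + 1) :
    ∀ i : ℤ, ∀ n : ℕ, 1 ≤ n → y i n = cheb n (fun k => x (i + k)) := by
  have hmesh : IsClusterMesh y := fun i n => hrec i (n + 1) n.succ_pos
  have hyc := hmesh.ext (isClusterMesh_cheb x) hy
    (fun i => by rw [hy0, cheb]) (fun i => by simp [hy1, cheb])
  exact fun i n _ => congrFun (congrFun hyc i) n

/-- a nonvanishing family in a field satisfying the cluster-mesh
recurrence is given by generalized Chebyshev polynomials in the first row. -/
theorem clusterMesh_eq_cheb {F : Type*} [Field F] (x : ℤ → F) (y : ℤ → ℕ → F)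
    (hx : ∀ i, x i ≠ 0) (hy : ∀ i n, y i n ≠ 0)
    (hy0 : ∀ i, y i 0 = 1) (hy1 : ∀ i, y i 1 = x i)
    (hrec : ∀ i : ℤ, ∀ n : ℕ, 1 ≤ n →
      y i n * y (i + 1) n = y i (n + 1) * y (i + 1) (n - 1) + 1) :
    ∀ i : ℤ, ∀ n : ℕ, 1 ≤ n → y i n = cheb n (fun k => x (i + k)) :=
  clusterMesh_eq_cheb_general x y hy hy0 hy1 hrec
end

section
/- Let r ≥ 1 and let u_0, ..., u_{r-1} be indeterminates over ℚ, with u_{-1} = u_r = 1 and x_i = (u_{i-1} + u_{i+1})/u_i for 0 ≤ i ≤ r−1. Then the elements x_0, ..., x_{r-1} are algebraically independent over ℚ; equivalently, {x_0, ..., x_{r-1}} is a transcendence basis of ℚ(u_0, ..., u_{r-1}) over ℚ. -/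
/-!
The `u_i` satisfy the three-term recurrence `u_{k+1} = x_k u_k - u_{k-1}` with `u_{-1} = 1`, so
`u_n = P_n(x) u_0 - P_{n-1}(x_1, ...)` for the generalized Chebyshev polynomials `P_n = cheb n`.
Taking `n = r`, where `u_r = 1`, shows that `P_r(x) u_i` lies in `ℚ[x_0, ..., x_{r-1}]` for every
`i`. Moreover `P_r(x) ≠ 0`: specializing all `u_i` to `1` turns every `x_k` into `2`, and
`P_r(2, ..., 2) = r + 1`. Hence `ℚ(u_0, ..., u_{r-1})` is algebraic over `ℚ[x_0, ..., x_{r-1}]`,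
and `r` elements with this property in a field of transcendence degree `r` form a transcendence
basis.
-/
open MvPolynomial Polynomial

/-- The field `ℚ(u_0, ..., u_{r-1})`. -/
abbrev FF (r : ℕ) := FractionRing (MvPolynomial (Fin r) ℚ)

/-- The indeterminates `u_i` for `0 ≤ i < r`, extended by `u_i = 1` outside this range
(so that `u_{-1} = u_r = 1`). -/
noncomputable def uu (r : ℕ) (i : ℤ) : FF r :=
  if h : 0 ≤ i ∧ i < r then
    algebraMap (MvPolynomial (Fin r) ℚ) (FF r) (X (⟨i.toNat, by omega⟩ : Fin r))
  else 1

/-- The cluster characters of the simple modules: `x_i = (u_{i-1} + u_{i+1}) / u_i`. -/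
noncomputable def xx (r : ℕ) (i : ℤ) : FF r := (uu r (i - 1) + uu r (i + 1)) / uu r i

section Cheb

variable {R : Type*} [CommRing R]

theorem map_cheb {S F : Type*} [CommRing S] [FunLike F R S] [RingHomClass F R S] (f : F) :
    ∀ (n : ℕ) (t : ℕ → R), f (cheb n t) = cheb n (f ∘ t)
  | 0, _ => map_one f
  | 1, _ => rfl
  | n + 2, t => by simp only [cheb_add_two, map_sub, map_mul, map_cheb f (n + 1), map_cheb f n,
      Function.comp_apply]

theorem cheb_mem {σ : Type*} [SetLike σ R] [SubringClass σ R] (S : σ) :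
    ∀ (n : ℕ) {t : ℕ → R}, (∀ k < n, t k ∈ S) → cheb n t ∈ S
  | 0, _, _ => one_mem S
  | 1, _, ht => ht 0 one_pos
  | n + 2, t, ht => sub_mem
      (mul_mem (ht (n + 1) (by omega)) (cheb_mem S (n + 1) fun k hk => ht k (by omega)))
      (cheb_mem S n fun k hk => ht k (by omega))

theorem cheb_const_two : ∀ n : ℕ, cheb n (fun _ => (2 : R)) = n + 1
  | 0 => by simp [cheb]
  | 1 => by norm_num [cheb]
  | n + 2 => by
    rw [cheb_add_two, cheb_const_two (n + 1), cheb_const_two n]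
    push_cast
    ring

theorem eq_cheb_of_recurrence {t w : ℕ → R} (hw : ∀ k, w (k + 2) = t k * w (k + 1) - w k) :
    ∀ n, w (n + 2) = cheb (n + 1) t * w 1 - cheb n (fun k => t (k + 1)) * w 0
  | 0 => by simp [cheb, hw]
  | 1 => by rw [hw, hw]; simp only [cheb]; ring
  | n + 2 => by
    rw [hw, eq_cheb_of_recurrence hw (n + 1), eq_cheb_of_recurrence hw n, cheb_add_two (n + 1),
      cheb_add_two n (fun k => t (k + 1))]
    ring

end Cheb

section RegularAt

variable {σ K : Type*} [Field K] (p : σ → K)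

attribute [local instance] RingHom.ker_isPrime

noncomputable abbrev regularAt : Subalgebra (MvPolynomial σ K) (FractionRing (MvPolynomial σ K)) :=
  Localization.subalgebra.ofField _ (RingHom.ker (MvPolynomial.eval p)).primeCompl
    (Ideal.primeCompl_le_nonZeroDivisors _)

noncomputable def evalAt : regularAt p →+* K :=
  IsLocalization.lift (M := (RingHom.ker (MvPolynomial.eval p)).primeCompl)
    (g := MvPolynomial.eval p) fun s => isUnit_iff_ne_zero.2 s.2

variable {p}

theorem div_mem_regularAt {a s : MvPolynomial σ K} (hs : MvPolynomial.eval p s ≠ 0) :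
    algebraMap _ (FractionRing _) a / algebraMap _ _ s ∈ regularAt p :=
  ⟨a, s, hs, div_eq_mul_inv _ _⟩

theorem evalAt_div {a s : MvPolynomial σ K} (hs : MvPolynomial.eval p s ≠ 0) :
    evalAt p ⟨_, div_mem_regularAt (a := a) hs⟩ =
      MvPolynomial.eval p a / MvPolynomial.eval p s := by
  have hs' : algebraMap _ (FractionRing (MvPolynomial σ K)) s ≠ 0 :=
    (map_ne_zero_iff _ (IsFractionRing.injective _ _)).2 fun h => hs (by simp [h])
  have hmul : (⟨_, div_mem_regularAt (a := a) hs⟩ : regularAt p) * algebraMap _ _ s =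
      algebraMap _ _ a :=
    Subtype.ext (div_mul_cancel₀ _ hs')
  rw [eq_div_iff hs]
  have := congrArg (evalAt p) hmul
  rwa [map_mul, evalAt, IsLocalization.lift_eq, IsLocalization.lift_eq] at this

end RegularAt

theorem isAlgebraic_of_mul_mem {R K : Type*} [CommRing R] [Field K] [Algebra R K]
    {S : Subalgebra R K} {c a : K} (hc : c ∈ S) (hc₀ : c ≠ 0) (hca : c * a ∈ S) :
    IsAlgebraic S a :=
  IsAlgebraic.of_mul (y := algebraMap S K ⟨c, hc⟩) (mem_nonZeroDivisors_of_ne_zero hc₀)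
    (isAlgebraic_algebraMap _) (isAlgebraic_algebraMap (⟨c * a, hca⟩ : S))

noncomputable def uuPoly (r : ℕ) (i : ℤ) : MvPolynomial (Fin r) ℚ :=
  if h : 0 ≤ i ∧ i < r then X ⟨i.toNat, by omega⟩ else 1

theorem uu_eq_algebraMap (r : ℕ) (i : ℤ) : uu r i = algebraMap _ (FF r) (uuPoly r i) := by
  unfold uu uuPoly
  split_ifs <;> simp

theorem uuPoly_fin (r : ℕ) (i : Fin r) : uuPoly r i = X i := by
  rw [uuPoly, dif_pos (by omega)]
  simp

theorem eval_uuPoly (r : ℕ) (i : ℤ) : eval 1 (uuPoly r i) = 1 := by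
  unfold uuPoly
  split_ifs <;> simp

theorem uu_ne_zero (r : ℕ) (i : ℤ) : uu r i ≠ 0 := by
  rw [uu_eq_algebraMap, map_ne_zero_iff _ (IsFractionRing.injective _ (FF r))]
  intro h
  simpa [h] using eval_uuPoly r i

theorem isTranscendenceBasis_uu (r : ℕ) : IsTranscendenceBasis ℚ (fun i : Fin r => uu r i) := by
  have : Algebra.IsAlgebraic (MvPolynomial (Fin r) ℚ) (FF r) :=
    IsLocalization.isAlgebraic _ (nonZeroDivisors _)
  convert (IsTranscendenceBasis.mvPolynomial (Fin r) ℚ).algebraMap_comp (A := FF r) with i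
  rw [uu_eq_algebraMap, uuPoly_fin, Function.comp_apply]

theorem uu_neg_one (r : ℕ) : uu r (-1) = 1 := by
  simp [uu]

theorem uu_natCast_self (r : ℕ) : uu r r = 1 := by
  simp [uu]

theorem uu_add_one (r : ℕ) (k : ℤ) : uu r (k + 1) = xx r k * uu r k - uu r (k - 1) := by
  rw [xx, div_mul_cancel₀ _ (uu_ne_zero r k)]
  ring

theorem uu_eq_cheb (r n : ℕ) :
    uu r (n + 1) = cheb (n + 1) (fun k => xx r k) * uu r 0 - cheb n (fun k => xx r (k + 1)) := by
  have hw : ∀ k : ℕ, uu r ((k + 2 : ℕ) - 1) =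
      xx r k * uu r ((k + 1 : ℕ) - 1) - uu r ((k : ℕ) - 1) := fun k => by
    rw [show ((k + 2 : ℕ) : ℤ) - 1 = k + 1 by push_cast; ring,
      show ((k + 1 : ℕ) : ℤ) - 1 = k by push_cast; ring]
    exact uu_add_one r k
  have := eq_cheb_of_recurrence (w := fun k : ℕ => uu r (k - 1)) hw n
  simp only [Nat.cast_ofNat, Nat.cast_one, Nat.cast_zero, Nat.cast_add, sub_self, zero_sub] at this
  rwa [show (n : ℤ) + 2 - 1 = n + 1 by ring, uu_neg_one, mul_one] at this

theorem xx_eq_div (r : ℕ) (k : ℤ) :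
    xx r k = algebraMap _ (FF r) (uuPoly r (k - 1) + uuPoly r (k + 1)) /
      algebraMap _ (FF r) (uuPoly r k) := by
  simp only [xx, uu_eq_algebraMap, map_add]

theorem xx_mem_regularAt (r : ℕ) (k : ℤ) : xx r k ∈ regularAt 1 :=
  xx_eq_div r k ▸ div_mem_regularAt (by rw [eval_uuPoly]; exact one_ne_zero)

theorem evalAt_xx (r : ℕ) (k : ℤ) : evalAt 1 ⟨xx r k, xx_mem_regularAt r k⟩ = 2 := by
  have hk : eval 1 (uuPoly r k) ≠ 0 := by rw [eval_uuPoly]; exact one_ne_zero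
  have e : (⟨xx r k, xx_mem_regularAt r k⟩ : regularAt (1 : Fin r → ℚ)) =
      ⟨_, div_mem_regularAt (a := uuPoly r (k - 1) + uuPoly r (k + 1)) hk⟩ :=
    Subtype.ext (xx_eq_div r k)
  rw [e, evalAt_div hk, map_add, eval_uuPoly, eval_uuPoly, eval_uuPoly]
  norm_num

theorem cheb_xx_ne_zero (r n : ℕ) : cheb n (fun k => xx r k) ≠ 0 := by
  set y : ℕ → regularAt (1 : Fin r → ℚ) := fun k => ⟨xx r k, xx_mem_regularAt r k⟩
  have hy : evalAt 1 (cheb n y) = n + 1 := by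
    rw [map_cheb, show evalAt 1 ∘ y = fun _ => 2 from funext fun k => evalAt_xx r k, cheb_const_two]
  have hval : cheb n (fun k => xx r k) = (regularAt 1).val (cheb n y) := by
    rw [map_cheb]; rfl
  intro h
  rw [hval] at h
  rw [show cheb n y = 0 from Subtype.ext h, map_zero] at hy
  exact Nat.cast_add_one_ne_zero n hy.symm

theorem cheb_xx_mul_uu_mem (r : ℕ) (i : Fin r) :
    cheb r (fun k => xx r k) * uu r i ∈ Algebra.adjoin ℚ (Set.range fun i : Fin r => xx r i) := by
  set S := Algebra.adjoin ℚ (Set.range fun i : Fin r => xx r i)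
  have hx (n : ℕ) (hn : n ≤ r) : cheb n (fun k => xx r k) ∈ S :=
    cheb_mem S n fun k hk => Algebra.subset_adjoin ⟨⟨k, by omega⟩, rfl⟩
  have hx' (n : ℕ) (hn : n + 1 ≤ r) : cheb n (fun k => xx r (k + 1)) ∈ S :=
    cheb_mem S n fun k hk => Algebra.subset_adjoin ⟨⟨k + 1, by omega⟩, by simp⟩
  obtain ⟨m, rfl⟩ : ∃ m, r = m + 1 := ⟨r - 1, by have := i.2; omega⟩
  have h0 : cheb (m + 1) (fun k => xx (m + 1) k) * uu (m + 1) 0 =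
      1 + cheb m (fun k => xx (m + 1) (k + 1)) := by
    have := uu_eq_cheb (m + 1) m
    rw [← Nat.cast_succ, uu_natCast_self] at this
    linear_combination -this
  obtain ⟨_ | l, hl⟩ := i
  · rw [Fin.val_mk, Nat.cast_zero, h0]
    exact add_mem (one_mem S) (hx' m le_rfl)
  · have e : cheb (m + 1) (fun k => xx (m + 1) k) * uu (m + 1) (l + 1 : ℕ) =
        cheb (l + 1) (fun k => xx (m + 1) k) * (1 + cheb m (fun k => xx (m + 1) (k + 1))) -
          cheb (m + 1) (fun k => xx (m + 1) k) * cheb l (fun k => xx (m + 1) (k + 1)) := by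
      rw [Nat.cast_succ, uu_eq_cheb, ← h0]
      ring
    rw [Fin.val_mk, e]
    exact sub_mem (mul_mem (hx _ (by omega)) (add_mem (one_mem S) (hx' m le_rfl)))
      (mul_mem (hx _ le_rfl) (hx' l (by omega)))

theorem isAlgebraic_uu (r : ℕ) (i : Fin r) :
    IsAlgebraic (Algebra.adjoin ℚ (Set.range fun i : Fin r => xx r i)) (uu r i) :=
  isAlgebraic_of_mul_mem (cheb_mem _ r fun k hk => Algebra.subset_adjoin ⟨⟨k, hk⟩, rfl⟩)
    (cheb_xx_ne_zero r r) (cheb_xx_mul_uu_mem r i)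

theorem xx_algebraicIndependent_general (r : ℕ) :
    AlgebraicIndependent ℚ (fun i : Fin r => xx r i) ∧
      IsTranscendenceBasis ℚ (fun i : Fin r => xx r i) := by
  have hu := isTranscendenceBasis_uu r
  have : Algebra.IsAlgebraic (Algebra.adjoin ℚ (Set.range fun i : Fin r => xx r i)) (FF r) :=
    hu.isAlgebraic_iff.2 (isAlgebraic_uu r)
  have hx := Algebra.IsAlgebraic.isTranscendenceBasis_of_le_trdeg_of_finite ℚ
    (fun i : Fin r => xx r i) hu.cardinalMk_eq_trdeg.le
  exact ⟨hx.1, hx⟩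

/-- the elements `x_0, ..., x_{r-1}` are algebraically independent over `ℚ`,
and form a transcendence basis of `ℚ(u_0, ..., u_{r-1})` over `ℚ`. -/
theorem xx_algebraicIndependent (r : ℕ) (hr : 1 ≤ r) :
    AlgebraicIndependent ℚ (fun i : Fin r => xx r i) ∧
      IsTranscendenceBasis ℚ (fun i : Fin r => xx r i) :=
  xx_algebraicIndependent_general r
end

section
/- For all integers m, n, k, j, p with p ≥ 1, 0 ≤ j ≤ p−1, 0 < j + kp < n, and m > n − j − kp, setting i = j + kp, the following identity holds in ℤ[t_0, ..., t_{p-1}] for the rank-p generalized Chebyshev polynomials (with indices of quasi-simples taken mod p): P_{m,p}^{(j)} · P_{n,p}^{(0)} = P_{m+i,p}^{(0)} · P_{n-i,p}^{(j)} + P_{i-1,p}^{(0)} · P_{m+i-n-1,p}^{(n+1 mod p)}, where P_{l,p}^{(s)} denotes P_l evaluated at the variables t_{s mod p}, t_{(s+1) mod p}, ..., t_{(s+l-1) mod p}. -/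
open MvPolynomial Polynomial

/-- `P_{l,p}^{(s)}`: the polynomial in `ℤ[t_0, ..., t_{p-1}]` obtained by evaluating
`P_l` at `t_{s mod p}, t_{(s+1) mod p}, ..., t_{(s+l-1) mod p}`. -/
noncomputable def chebP (l p s : ℕ) : MvPolynomial ℕ ℤ :=
  cheb l (fun q => X ((s + q) % p))

/-!
Put `i = e + 1`, `n = i + d` and `m = d + 1 + c`: the identity then involves no truncated
subtraction and makes sense for any sequence of variables. As functions of `c`, both sides satisfy
the three-term recurrence defining `P`, so it suffices to compare them at `c = 0` and `c = 1`. At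
`c = 0` the identity says that the Casoratian of two solutions of one recurrence is constant, and
`c = 1` follows from it by one step of the recurrence. Rank `p` enters only through
`P_{l,p}^{(s)}` depending on `s` modulo `p`.
-/

section Continuant

variable {R : Type*} [CommRing R]

def chebShift (t : ℕ → R) (a l : ℕ) : R := cheb l (fun q => t (a + q))

theorem chebShift_zero (t : ℕ → R) (a : ℕ) : chebShift t a 0 = 1 := rfl

theorem chebShift_one (t : ℕ → R) (a : ℕ) : chebShift t a 1 = t a := by
  simp [chebShift, cheb]

theorem chebShift_add_two (t : ℕ → R) (a l : ℕ) :
    chebShift t a (l + 2) = t (a + l + 1) * chebShift t a (l + 1) - chebShift t a l := by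
  simp only [chebShift, cheb, add_assoc]

def ChebRecurrence (u f : ℕ → R) : Prop := ∀ c, f (c + 2) = u c * f (c + 1) - f c

namespace ChebRecurrence

variable {u f g : ℕ → R}

theorem casoratian_eq (hf : ChebRecurrence u f) (hg : ChebRecurrence u g) (d : ℕ) :
    f (d + 1) * g d - g (d + 1) * f d = f 1 * g 0 - g 1 * f 0 := by
  induction d with
  | zero => rfl
  | succ d ih => rw [← ih, hf, hg]; ring

theorem eq_of_eq_zero_of_eq_one (hf : ChebRecurrence u f) (hg : ChebRecurrence u g)
    (h0 : f 0 = g 0) (h1 : f 1 = g 1) : f = g := by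
  suffices h : ∀ c, f c = g c ∧ f (c + 1) = g (c + 1) from funext fun c => (h c).1
  intro c
  induction c with
  | zero => exact ⟨h0, h1⟩
  | succ c ih => exact ⟨ih.2, by rw [hf, hg, ih.1, ih.2]⟩

end ChebRecurrence

theorem chebRecurrence_chebShift (t : ℕ → R) {a b N : ℕ} (h : a + b + 1 = N) :
    ChebRecurrence (fun c => t (N + c)) (fun c => chebShift t a (b + c)) := by
  intro c
  show chebShift t a (b + c + 2) = t (N + c) * chebShift t a (b + c + 1) - chebShift t a (b + c)
  rw [chebShift_add_two, ← h, show a + (b + c) + 1 = a + b + 1 + c by omega]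

theorem chebShift_casoratian (t : ℕ → R) (e d : ℕ) :
    chebShift t (e + 1) (d + 1) * chebShift t 0 (e + 1 + d)
      - chebShift t 0 (e + d + 2) * chebShift t (e + 1) d = chebShift t 0 e := by
  have hf := chebRecurrence_chebShift t (a := e + 1) (b := 0) (N := e + 2) rfl
  have hg := chebRecurrence_chebShift t (a := 0) (b := e + 1) (N := e + 2) (by omega)
  simp only [zero_add] at hf
  have hW := hf.casoratian_eq hg d
  have hS := chebShift_add_two t 0 e
  simp only [chebShift_one, chebShift_zero, add_zero, zero_add] at hW hS
  rw [show e + 1 + (d + 1) = e + d + 2 by omega, show e + 1 + 1 = e + 2 from rfl] at hW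
  linear_combination hW - hS

theorem chebShift_mul_chebShift (t : ℕ → R) (e d c : ℕ) :
    chebShift t (e + 1) (d + 1 + c) * chebShift t 0 (e + 1 + d) =
      chebShift t 0 (e + d + 2 + c) * chebShift t (e + 1) d
        + chebShift t 0 e * chebShift t (e + d + 2) c := by
  have h1 := chebRecurrence_chebShift t (a := e + 1) (b := d + 1) (N := e + d + 3) (by omega)
  have h2 := chebRecurrence_chebShift t (a := 0) (b := e + d + 2) (N := e + d + 3) (by omega)
  have h3 := chebRecurrence_chebShift t (a := e + d + 2) (b := 0) (N := e + d + 3) (by omega)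
  simp only [zero_add] at h3
  have hW := chebShift_casoratian t e d
  set A := chebShift t 0 (e + 1 + d)
  set B := chebShift t (e + 1) d
  have hF : ChebRecurrence (fun c => t (e + d + 3 + c))
      (fun c => chebShift t (e + 1) (d + 1 + c) * A - chebShift t 0 (e + d + 2 + c) * B) :=
    fun c => by linear_combination A * h1 c - B * h2 c
  have hG : ChebRecurrence (fun c => t (e + d + 3 + c))
      (fun c => chebShift t 0 e * chebShift t (e + d + 2) c) :=
    fun c => by linear_combination chebShift t 0 e * h3 c
  have hF1 : chebShift t (e + 1) (d + 1 + 1) * A - chebShift t 0 (e + d + 2 + 1) * B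
      = chebShift t 0 e * chebShift t (e + d + 2) 1 := by
    have hx := chebShift_add_two t (e + 1) d
    have hy := chebShift_add_two t 0 (e + 1 + d)
    rw [show e + 1 + d + 1 = e + d + 2 by omega] at hx
    rw [show 0 + (e + 1 + d) + 1 = e + d + 2 by omega,
      show e + 1 + d + 1 = e + d + 2 by omega, show e + 1 + d + 2 = e + d + 2 + 1 by omega] at hy
    rw [chebShift_one]
    linear_combination A * hx - B * hy + t (e + d + 2) * hW
  have := congrFun (hF.eq_of_eq_zero_of_eq_one hG (by simpa [chebShift_zero] using hW) hF1) c
  linear_combination this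

end Continuant

theorem chebP_eq_chebShift (l p s : ℕ) : chebP l p s = chebShift (fun q => X (q % p)) s l := rfl

theorem chebP_congr_mod {l p s s' : ℕ} (h : s % p = s' % p) : chebP l p s = chebP l p s' := by
  unfold chebP
  congr 1
  funext q
  rw [Nat.add_mod, h, ← Nat.add_mod]

theorem cheb_multiplication_tube_general (m n j p : ℕ) (k : ℤ) (i : ℕ)
    (hi : (i : ℤ) = (j : ℤ) + k * p)
    (hi0 : 0 < i) (hin : i < n) (hmn : m > n - i) :
    chebP m p j * chebP n p 0 =
      chebP (m + i) p 0 * chebP (n - i) p j +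
        chebP (i - 1) p 0 * chebP (m + i - n - 1) p ((n + 1) % p) := by
  have hji : j % p = i % p := by
    have : (j : ℤ) % p = (i : ℤ) % p := by rw [hi, Int.add_mul_emod_self_right]
    exact_mod_cast this
  obtain ⟨e, rfl⟩ : ∃ e, i = e + 1 := ⟨i - 1, by omega⟩
  obtain ⟨d, rfl⟩ : ∃ d, n = e + 1 + d := ⟨n - (e + 1), by omega⟩
  obtain ⟨c, rfl⟩ : ∃ c, m = d + 1 + c := ⟨m - (d + 1), by omega⟩
  rw [chebP_congr_mod hji, chebP_congr_mod hji, chebP_congr_mod (Nat.mod_mod _ p),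
    show e + 1 + d - (e + 1) = d by omega, show e + 1 - 1 = e from rfl,
    show d + 1 + c + (e + 1) - (e + 1 + d) - 1 = c by omega,
    show d + 1 + c + (e + 1) = e + d + 2 + c by omega, show e + 1 + d + 1 = e + d + 2 by omega]
  simp only [chebP_eq_chebShift]
  exact chebShift_mul_chebShift _ e d c

/-- the multiplication formula in tubes of rank `p`, in polynomial form. -/
theorem cheb_multiplication_tube (m n j p : ℕ) (k : ℤ) (i : ℕ)
    (hp : 1 ≤ p) (hj : j ≤ p - 1) (hi : (i : ℤ) = (j : ℤ) + k * p)
    (hi0 : 0 < i) (hin : i < n) (hm : 0 < m) (hmn : m > n - i) :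
    chebP m p j * chebP n p 0 =
      chebP (m + i) p 0 * chebP (n - i) p j +
        chebP (i - 1) p 0 * chebP (m + i - n - 1) p ((n + 1) % p) :=
  cheb_multiplication_tube_general m n j p k i hi hi0 hin hmn
end

section
/- Let S_n denote the normalized Chebyshev polynomials of the second kind (S_0 = 1, S_1(x) = x, S_{n+1}(x) = x S_n(x) − S_{n-1}(x)). Then for all m, n, j with 0 < j < n and m > n − j: S_m(x) S_n(x) = S_{m+j}(x) S_{n-j}(x) + S_{j-1}(x) S_{m+j-n-1}(x). -/
open MvPolynomial Polynomial

/-- Normalized Chebyshev polynomials of the second kind. -/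
noncomputable def chebS : ℕ → Polynomial ℤ
  | 0 => 1
  | 1 => Polynomial.X
  | (n + 2) => Polynomial.X * chebS (n + 1) - chebS n

/-! `chebS` is the restriction to `ℕ` of `Polynomial.Chebyshev.S`, which is defined on all of `ℤ`;
there the identity holds for all indices. Each side solves the recurrence
`f (n + 2) = X f (n + 1) - f n` in one of the indices, so it suffices to compare them at two
consecutive values of that index, where they reduce to `S (-1) = 0`, `S 0 = 1` and the invariant
`S n ^ 2 + S (n + 1) ^ 2 - X S n S (n + 1) = 1`. -/

def IsChebyshevSeq {R : Type*} [CommRing R] (x : R) (f : ℤ → R) : Prop :=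
  ∀ n, f (n + 2) = x * f (n + 1) - f n

theorem IsChebyshevSeq.ext {R : Type*} [CommRing R] {x : R} {f g : ℤ → R}
    (hf : IsChebyshevSeq x f) (hg : IsChebyshevSeq x g) (n₀ : ℤ)
    (h₀ : f n₀ = g n₀) (h₁ : f (n₀ + 1) = g (n₀ + 1)) : f = g := by
  suffices h : ∀ k : ℤ, f (n₀ + k) = g (n₀ + k) ∧ f (n₀ + (k + 1)) = g (n₀ + (k + 1)) by
    funext n
    simpa using (h (n - n₀)).1
  intro k
  induction k using Int.induction_on with
  | zero => simpa using ⟨h₀, h₁⟩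
  | succ k ih =>
    refine ⟨ih.2, ?_⟩
    rw [show n₀ + (k + 1 + 1) = n₀ + k + 2 by ring, hf, hg, ih.1, add_assoc, ih.2]
  | pred k ih =>
    refine ⟨?_, by simpa using ih.1⟩
    linear_combination (norm := ring_nf) hf (n₀ - k - 1) - hg (n₀ - k - 1) + x * ih.1 - ih.2

namespace Polynomial.Chebyshev

variable (R : Type*) [CommRing R]

theorem S_add_one_mul_S_add_sub_S_add_add_one_mul_S (n c : ℤ) :
    S R (n + 1) * S R (n + c) - S R (n + c + 1) * S R n = S R (c - 1) := by
  have hlhs : IsChebyshevSeq X fun c => S R (n + 1) * S R (n + c) - S R (n + c + 1) * S R n :=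
    fun c => by
      linear_combination (norm := ring_nf)
        S R (n + 1) * S_add_two R (n + c) - S R n * S_add_two R (n + c + 1)
  have hrhs : IsChebyshevSeq X fun c => S R (c - 1) :=
    fun c => by linear_combination (norm := ring_nf) S_add_two R (c - 1)
  refine congrFun (hlhs.ext hrhs 0 ?_ ?_) c
  · simp
  · linear_combination (norm := ring_nf) S_sq_add_S_sq R n - S R n * S_add_two R n - S_zero R

theorem S_mul_S (a b c : ℤ) :
    S R a * S R b = S R (a + c) * S R (b - c) + S R (c - 1) * S R (a - b + c - 1) := by
  have hlhs : IsChebyshevSeq X fun a => S R a * S R b - S R (a + c) * S R (b - c) :=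
    fun a => by
      linear_combination (norm := ring_nf)
        S R b * S_add_two R a - S R (b - c) * S_add_two R (a + c)
  have hrhs : IsChebyshevSeq X fun a => S R (c - 1) * S R (a - b + c - 1) :=
    fun a => by linear_combination (norm := ring_nf) S R (c - 1) * S_add_two R (a - b + c - 1)
  rw [← sub_eq_iff_eq_add']
  refine congrFun (hlhs.ext hrhs (b - c) ?_ ?_) a
  · simp [mul_comm]
  · linear_combination (norm := ring_nf)
      S_add_one_mul_S_add_sub_S_add_add_one_mul_S R (b - c) c - S R (c - 1) * S_zero R

end Polynomial.Chebyshev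

theorem chebS_eq_S (n : ℕ) : chebS n = Chebyshev.S ℤ n := by
  induction n using Nat.twoStepInduction with
  | zero => simp [chebS]
  | one => simp [chebS]
  | more n ih₀ ih₁ =>
    rw [chebS, ih₀, ih₁]
    push_cast
    exact (Chebyshev.S_add_two ℤ n).symm

/-- the multiplication formula for normalized Chebyshev polynomials of
the second kind (rank-1 case of the multiplication theorem in homogeneous tubes). -/
theorem chebS_multiplication (m n j : ℕ) (hj : 0 < j) (hjn : j < n) (hm : m > n - j) :
    chebS m * chebS n = chebS (m + j) * chebS (n - j) + chebS (j - 1) * chebS (m + j - n - 1) := by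
  have hnj : ((n - j : ℕ) : ℤ) = n - j := by omega
  have hj₁ : ((j - 1 : ℕ) : ℤ) = j - 1 := by omega
  have hmjn : ((m + j - n - 1 : ℕ) : ℤ) = m - n + j - 1 := by omega
  simp only [chebS_eq_S, hnj, hj₁, hmjn, Nat.cast_add]
  exact Chebyshev.S_mul_S ℤ m n j
end
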